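/- arXiv:math/0211249 — 3 statements merged into one kernel-verified Lean document; each statement's English description precedes it below -/
import Mathlib

section
/- Let n be a positive integer, and let r, s, l, m, k be integers with r, s > 0, rs = n, lm = nk², and -mr - ls + 2nk = 1. Let r', s', l', m', k' be integers with r', s' > 0 satisfying the analogous equations. Suppose further that mr ≡ m'r' (mod n) and ls ≡ l's' (mod n). If a prime p divides r but not r', then p divides s', and then p divides l, and hence p divides mr + ls, contradicting mr + ls ≡ -1 (mod 2n); consequently every prime dividing r also divides r'. -/
theorem stmt_9_general (n r s l m k r' s' l' : ℤ)
    (h1 : r * s = n) (h3 : -(m * r) - l * s + 2 * n * k = 1)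
    (h1' : r' * s' = n)
    (hls : l * s ≡ l' * s' [ZMOD n]) :
    ∀ p : ℕ, p.Prime → (p : ℤ) ∣ r → (p : ℤ) ∣ r' := by
  intro p hp hpr
  by_contra hpr'
  have hp : Prime (p : ℤ) := Nat.prime_iff_prime_int.mp hp
  have hpn : (p : ℤ) ∣ n := h1 ▸ hpr.mul_right s
  have hps' : (p : ℤ) ∣ s' := (hp.dvd_or_dvd (h1' ▸ hpn)).resolve_left hpr'
  have hpls : (p : ℤ) ∣ l * s :=
    (dvd_iff_dvd_of_dvd_sub (hls.of_dvd hpn).dvd).mp (hps'.mul_left l')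
  refine hp.not_dvd_one ?_
  rw [← h3]
  exact ((hpr.mul_left m).neg_right.sub hpls).add ((hpn.mul_left 2).mul_right k)

theorem stmt_9 (n r s l m k r' s' l' m' k' : ℤ) (hn : 0 < n)
    (hr : 0 < r) (hs : 0 < s) (hr' : 0 < r') (hs' : 0 < s')
    (h1 : r * s = n) (h2 : l * m = n * k ^ 2) (h3 : -(m * r) - l * s + 2 * n * k = 1)
    (h1' : r' * s' = n) (h2' : l' * m' = n * k' ^ 2)
    (h3' : -(m' * r') - l' * s' + 2 * n * k' = 1)
    (hmr : m * r ≡ m' * r' [ZMOD n]) (hls : l * s ≡ l' * s' [ZMOD n]) :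
    ∀ p : ℕ, p.Prime → (p : ℤ) ∣ r → (p : ℤ) ∣ r' :=
  stmt_9_general n r s l m k r' s' l' h1 h3 h1' hls
end

section
/- Let n be a positive integer and r, s, l, m, k integers with rs = n, lm = nk², and -mr - ls + 2nk = 1. Then the integer d = rm - ls is odd and gcd(rm - ls, 2n) = 1. -/
theorem stmt_13 (n r s l m k : ℤ) (hn : 0 < n)
    (h1 : r * s = n) (h2 : l * m = n * k ^ 2) (h3 : -(m * r) - l * s + 2 * n * k = 1) :
    Odd (r * m - l * s) ∧ IsCoprime (r * m - l * s) (2 * n) := by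
  set d := r * m - l * s with hd
  have key : d * d + (2 * k) * (2 * n) = 1 := by
    linear_combination (-(m * r + l * s + 2 * n * k - 1)) * h3 + (-4 * l * m) * h1 +
      (-4 * n) * h2
  constructor
  · have hodd : Odd (d * d) := ⟨-(2 * k * n), by linarith⟩
    exact (Int.odd_mul.mp hodd).1
  · exact ⟨d, 2 * k, by linarith⟩
end

section
/- Let n be a positive integer, let r, s, r', s' be positive integers and l, m, k, l', m', k' be integers satisfying rs = n, lm = nk², mr + ls = 2nk - 1, r's' = n, l'm' = n(k')², m'r' + l's' = 2nk' - 1. If r = r' then s = s', and moreover (rm - ls) ≡ ±(r'm' - l's') (mod 2n) implies {r, s} = {r', s'} as unordered pairs. -/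
private lemma cop_aux (a b : ℕ) (d : ℤ) (ha : 2 * (a : ℤ) ∣ d - 1)
    (hb : 2 * (b : ℤ) ∣ d + 1) : Nat.Coprime a b := by
  have ha' : ((2 * a : ℕ) : ℤ) ∣ d - 1 := by push_cast; exact ha
  have hb' : ((2 * b : ℕ) : ℤ) ∣ d + 1 := by push_cast; exact hb
  have hg1 : ((Nat.gcd (2 * a) (2 * b) : ℕ) : ℤ) ∣ d - 1 :=
    dvd_trans (Int.natCast_dvd_natCast.2 (Nat.gcd_dvd_left _ _)) ha'
  have hg2 : ((Nat.gcd (2 * a) (2 * b) : ℕ) : ℤ) ∣ d + 1 :=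
    dvd_trans (Int.natCast_dvd_natCast.2 (Nat.gcd_dvd_right _ _)) hb'
  have hg : ((Nat.gcd (2 * a) (2 * b) : ℕ) : ℤ) ∣ 2 := by
    have h := dvd_sub hg2 hg1
    have he : (d + 1) - (d - 1) = 2 := by ring
    rwa [he] at h
  have hg' : Nat.gcd (2 * a) (2 * b) ∣ 2 := by exact_mod_cast hg
  rw [Nat.gcd_mul_left] at hg'
  have h1 : Nat.gcd a b ∣ 1 :=
    (Nat.mul_dvd_mul_iff_left (by norm_num : 0 < 2)).1 (by simpa using hg')
  exact Nat.dvd_one.1 h1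

theorem stmt_17 (n : ℕ) (hn : 0 < n) (r s r' s' : ℕ) (l m k l' m' k' : ℤ)
    (hr : 0 < r) (hs : 0 < s) (hr' : 0 < r') (hs' : 0 < s')
    (h1 : r * s = n) (h2 : l * m = (n : ℤ) * k ^ 2)
    (h3 : m * r + l * s = 2 * n * k - 1)
    (h1' : r' * s' = n) (h2' : l' * m' = (n : ℤ) * k' ^ 2)
    (h3' : m' * r' + l' * s' = 2 * n * k' - 1) :
    (r = r' → s = s') ∧
    ((((r : ℤ) * m - l * s ≡ (r' : ℤ) * m' - l' * s' [ZMOD (2 * n)]) ∨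
      ((r : ℤ) * m - l * s ≡ -((r' : ℤ) * m' - l' * s') [ZMOD (2 * n)])) →
      ({r, s} : Finset ℕ) = {r', s'}) := by
  have hnn : (n : ℤ) = (r : ℤ) * (s : ℤ) := by exact_mod_cast h1.symm
  have hnn' : (n : ℤ) = (r' : ℤ) * (s' : ℤ) := by exact_mod_cast h1'.symm
  set d : ℤ := (r : ℤ) * m - l * s with hd
  set d' : ℤ := (r' : ℤ) * m' - l' * s' with hd'
  have hdr : 2 * (r : ℤ) ∣ d - 1 := ⟨m - s * k, by rw [hd]; linear_combination -h3 - 2*k*hnn⟩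
  have hds : 2 * (s : ℤ) ∣ d + 1 := ⟨r * k - l, by rw [hd]; linear_combination h3 + 2*k*hnn⟩
  have hdr' : 2 * (r' : ℤ) ∣ d' - 1 :=
    ⟨m' - s' * k', by rw [hd']; linear_combination -h3' - 2*k'*hnn'⟩
  have hds' : 2 * (s' : ℤ) ∣ d' + 1 :=
    ⟨r' * k' - l', by rw [hd']; linear_combination h3' + 2*k'*hnn'⟩
  have hr'n : 2 * (r' : ℤ) ∣ 2 * (n : ℤ) := ⟨s', by rw [hnn']; ring⟩
  have hs'n : 2 * (s' : ℤ) ∣ 2 * (n : ℤ) := ⟨r', by rw [hnn']; ring⟩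
  constructor
  · intro h
    subst h
    exact Nat.eq_of_mul_eq_mul_left hr (h1.trans h1'.symm)
  · rintro (h | h)
    · -- d ≡ d' mod 2n
      have hdiff : 2 * (n : ℤ) ∣ d - d' := (Int.ModEq.dvd h.symm)
      have hA : 2 * (r' : ℤ) ∣ d - 1 := by
        have := dvd_add (hr'n.trans hdiff) hdr'
        have he : (d - d') + (d' - 1) = d - 1 := by ring
        rwa [he] at this
      have hB : 2 * (s' : ℤ) ∣ d + 1 := by
        have := dvd_add (hs'n.trans hdiff) hds'
        have he : (d - d') + (d' + 1) = d + 1 := by ring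
        rwa [he] at this
      have c1 : Nat.Coprime r s' := cop_aux r s' d hdr hB
      have c2 : Nat.Coprime r' s := cop_aux r' s d hA hds
      have hrr' : r ∣ r' := c1.dvd_of_dvd_mul_right (Dvd.intro s (h1.trans h1'.symm))
      have hr'r : r' ∣ r := c2.dvd_of_dvd_mul_right (Dvd.intro s' (h1'.trans h1.symm))
      have hre : r = r' := Nat.dvd_antisymm hrr' hr'r
      have hse : s = s' := Nat.eq_of_mul_eq_mul_left hr (by rw [h1, hre]; exact h1'.symm)
      rw [hre, hse]
    · -- d ≡ -d' mod 2n
      have hdiff : 2 * (n : ℤ) ∣ d + d' := by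
        have := Int.ModEq.dvd h.symm
        have he : d - -d' = d + d' := by ring
        rwa [he] at this
      have hA : 2 * (s' : ℤ) ∣ d - 1 := by
        have := dvd_sub (hs'n.trans hdiff) hds'
        have he : (d + d') - (d' + 1) = d - 1 := by ring
        rwa [he] at this
      have hB : 2 * (r' : ℤ) ∣ d + 1 := by
        have := dvd_sub (hr'n.trans hdiff) hdr'
        have he : (d + d') - (d' - 1) = d + 1 := by ring
        rwa [he] at this
      have c1 : Nat.Coprime r r' := cop_aux r r' d hdr hB
      have c2 : Nat.Coprime s' s := cop_aux s' s d hA hds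
      have hrs' : r ∣ s' := c1.dvd_of_dvd_mul_left (Dvd.intro s (h1.trans h1'.symm))
      have hs'r : s' ∣ r := c2.dvd_of_dvd_mul_right
        (Dvd.intro_left r' (h1'.trans h1.symm))
      have hre : r = s' := Nat.dvd_antisymm hrs' hs'r
      have hse : s = r' := by
        have hh : r * s = r * r' := by rw [h1, hre, mul_comm s' r']; exact h1'.symm
        exact Nat.eq_of_mul_eq_mul_left hr hh
      rw [hre, hse, Finset.pair_comm]
end
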